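/- arXiv:2308.11024 — 6 statements merged into one kernel-verified Lean document; each statement's English description precedes it below -/
import Mathlib

section
/- Let C₁, …, Cₙ be convex sets in ℝ², let f : 𝒞(ℝ²) → ℝ be a monotone function on convex sets, and let α ∈ ℝ. If a direction v ∈ S¹ is an (f,α)-stabbing direction for every pair Cᵢ, Cⱼ (i.e., for each pair there is a line parallel to v that is an (f,α)-stabber of both sets), then v is an (f,α)-stabbing direction for all the sets simultaneously: there exists a single line ℓ parallel to v such that f(ℓ⁺(Cᵢ)) ≥ α and f(ℓ⁻(Cᵢ)) ≥ α for every i. -/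
open MeasureTheory TopologicalSpace
open scoped Classical

noncomputable section

/-- The plane. -/
abbrev Pt : Type := ℝ × ℝ

/-- Planar cross product. -/
def pcross (v w : Pt) : ℝ := v.1 * w.2 - v.2 * w.1

/-- A directed line in the plane: a base point and a nonzero direction vector. -/
structure DLine : Type where
  p : Pt
  v : Pt
  hv : v ≠ 0

/-- The closed half-plane to the left of a directed line. -/
def DLine.left (ℓ : DLine) : Set Pt := {q | 0 ≤ pcross ℓ.v (q - ℓ.p)}

/-- The closed half-plane to the right of a directed line. -/
def DLine.right (ℓ : DLine) : Set Pt := {q | pcross ℓ.v (q - ℓ.p) ≤ 0}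

/-- The set of points of the line. -/
def DLine.line (ℓ : DLine) : Set Pt := {q | pcross ℓ.v (q - ℓ.p) = 0}

/-- Parametrization of the line along its direction. -/
def DLine.pt (ℓ : DLine) (t : ℝ) : Pt := ℓ.p + t • ℓ.v

/-- `f` is a monotone function on convex sets. -/
def MonoConvex (f : Set Pt → ℝ) : Prop :=
  ∀ A B : Set Pt, Convex ℝ A → Convex ℝ B → A ⊆ B → f A ≤ f B

/-- `ℓ` is an `(f, α)`-stabber of `C`. -/
def Stabs (f : Set Pt → ℝ) (α : ℝ) (ℓ : DLine) (C : Set Pt) : Prop :=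
  α ≤ f (ℓ.left ∩ C) ∧ α ≤ f (ℓ.right ∩ C)

/-- `ℓ` meets the sets `C 0, …, C (k-1)` in this order along its direction. -/
def MeetsInOrder (ℓ : DLine) {k : ℕ} (C : Fin k → Set Pt) : Prop :=
  ∃ t : Fin k → ℝ, Monotone t ∧ ∀ m, ℓ.pt (t m) ∈ C m

/-- `ℓ` meets three sets in the order `A, B, C`. -/
def Meets3 (ℓ : DLine) (A B C : Set Pt) : Prop :=
  ∃ s t u : ℝ, s ≤ t ∧ t ≤ u ∧ ℓ.pt s ∈ A ∧ ℓ.pt t ∈ B ∧ ℓ.pt u ∈ C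

/-- `f` is continuous with respect to the Hausdorff metric on nonempty compact sets. -/
def HausCont (f : Set Pt → ℝ) : Prop :=
  Continuous fun K : NonemptyCompacts Pt => f (K : Set Pt)

/-- The percent-area (normalized area) function of `K`. -/
def pArea (K : Set Pt) (C : Set Pt) : ℝ :=
  (volume (C ∩ K)).toReal / (volume K).toReal

/-- `ℓ` is an `(f, α)`-stabber of `K` for the percent-area function of `K`. -/
def StabsPA (α : ℝ) (ℓ : DLine) (K : Set Pt) : Prop :=
  α ≤ pArea K (ℓ.left ∩ K) ∧ α ≤ pArea K (ℓ.right ∩ K)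

/-- The reduced set `C'`: points of `C` through which the line in direction `v`
is an `(f, α)`-stabber of `C` (i.e. `C` minus the maximal pieces of `f`-value `< α`
on each side). -/
def reduceSet (f : Set Pt → ℝ) (α : ℝ) (v : Pt) (hv : v ≠ 0) (C : Set Pt) : Set Pt :=
  {x ∈ C | Stabs f α ⟨x, v, hv⟩ C}

/-- The middle value of three reals. -/
def mid3 (a b c : ℝ) : ℝ := a + b + c - max a (max b c) - min a (min b c)

/-- The colorful `(f, α)`-separating sign of a set with respect to a directed line. -/
def signOf (f : Set Pt → ℝ) (α : ℝ) (ℓ : DLine) (C : Set Pt) : ℤ :=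
  if Stabs f α ℓ C then 0 else if f (ℓ.right ∩ C) < α then -1 else 1

/-- The middle `(f, α)`-separating line of a colored family in direction `d`:
the line parallel to `d` crossing `d^⊥` at `(u₂ + v₂)/2`, where `u₂` (resp. `v₂`)
is the middle value of the color-wise sups (resp. infs) of the endpoints of the
projections of the reduced sets onto `d^⊥`. -/
def middleLine (f : Set Pt → ℝ) (α : ℝ) (d : Pt) (hd : d ≠ 0)
    {n : ℕ} (C : Fin n → Set Pt) (color : Fin n → Fin 3) : DLine :=
  let a : Fin n → ℝ := fun i => sInf ((fun x => pcross d x) '' reduceSet f α d hd (C i))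
  let b : Fin n → ℝ := fun i => sSup ((fun x => pcross d x) '' reduceSet f α d hd (C i))
  let p : Fin 3 → ℝ := fun c => sSup (a '' {i | color i = c})
  let q : Fin 3 → ℝ := fun c => sInf (b '' {i | color i = c})
  let θ : ℝ := (mid3 (p 0) (p 1) (p 2) + mid3 (q 0) (q 1) (q 2)) / 2
  ⟨(θ / (d.1 ^ 2 + d.2 ^ 2)) • (-d.2, d.1), d, hd⟩

/-- A colored sign vector is balanced if for every two colors there is a coordinate
of one color equal to `1` and a coordinate of the other color equal to `-1`. -/
def BalancedVec {n : ℕ} (x : Fin n → ℤ) (color : Fin n → Fin 3) : Prop :=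
  ∀ c₁ c₂ : Fin 3, c₁ ≠ c₂ → ∃ i j : Fin n, color i = c₁ ∧ color j = c₂ ∧
    ((x i = 1 ∧ x j = -1) ∨ (x i = -1 ∧ x j = 1))

/-- A colored sign vector is Hadwiger if no three increasing, differently colored
coordinates form the pattern `(-1, 1, -1)` or `(1, -1, 1)`. -/
def HadwigerVec {n : ℕ} (x : Fin n → ℤ) (color : Fin n → Fin 3) : Prop :=
  ∀ i j k : Fin n, i < j → j < k →
    color i ≠ color j → color i ≠ color k → color j ≠ color k →
    ¬ ((x i = -1 ∧ x j = 1 ∧ x k = -1) ∨ (x i = 1 ∧ x j = -1 ∧ x k = 1))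

/-- The axis-aligned rectangle `[0,a] × [0,b]`. -/
def rect (a b : ℝ) : Set Pt := Set.Icc (0:ℝ) a ×ˢ Set.Icc (0:ℝ) b

/-- The two short (vertical) sides of the rectangle `[0,a] × [0,b]` (for `b < a`). -/
def shortSides (a b : ℝ) : Set Pt :=
  ({(0:ℝ)} ×ˢ Set.Icc (0:ℝ) b) ∪ ({a} ×ˢ Set.Icc (0:ℝ) b)

/-- A directed line does not intersect the short sides of the rectangle. -/
def avoidsShort (a b : ℝ) (ℓ : DLine) : Prop := ℓ.line ∩ shortSides a b = ∅

/-- Every directed line through `p` avoiding the short sides cuts the rectangle into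
pieces of area fractions exactly `α` and `1 - α`. -/
def cutsExactly (a b α : ℝ) (p : Pt) : Prop :=
  ∀ ℓ : DLine, p ∈ ℓ.line → avoidsShort a b ℓ →
    ((pArea (rect a b) (ℓ.left ∩ rect a b) = α ∧
        pArea (rect a b) (ℓ.right ∩ rect a b) = 1 - α) ∨
     (pArea (rect a b) (ℓ.left ∩ rect a b) = 1 - α ∧
        pArea (rect a b) (ℓ.right ∩ rect a b) = α))

def mkLine (v : Pt) (hv0 : v ≠ 0) (c : ℝ) : DLine :=
  ⟨(c / (v.1 ^ 2 + v.2 ^ 2)) • (-v.2, v.1), v, hv0⟩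

lemma sq_sum_pos (v : Pt) (hv0 : v ≠ 0) : 0 < v.1 ^ 2 + v.2 ^ 2 := by
  have : v.1 ≠ 0 ∨ v.2 ≠ 0 := by
    by_contra h; push_neg at h; exact hv0 (Prod.ext h.1 h.2)
  rcases this with h | h <;> positivity

lemma pcross_mkLine_p (v : Pt) (hv0 : v ≠ 0) (c : ℝ) :
    pcross v (mkLine v hv0 c).p = c := by
  have hs := (sq_sum_pos v hv0).ne'
  simp only [mkLine, pcross, Prod.smul_fst, Prod.smul_snd, smul_eq_mul]
  field_simp
  ring

lemma pcross_sub' (v q p : Pt) : pcross v (q - p) = pcross v q - pcross v p := by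
  simp [pcross]; ring

lemma left_eq' (ℓ : DLine) : ℓ.left = {q | pcross ℓ.v ℓ.p ≤ pcross ℓ.v q} := by
  ext q; simp [DLine.left, pcross_sub', sub_nonneg]

lemma right_eq' (ℓ : DLine) : ℓ.right = {q | pcross ℓ.v q ≤ pcross ℓ.v ℓ.p} := by
  ext q; simp [DLine.right, pcross_sub', sub_nonpos]

lemma pcross_combo (v q1 q2 : Pt) (a b : ℝ) :
    pcross v (a • q1 + b • q2) = a * pcross v q1 + b * pcross v q2 := by
  simp only [pcross, Prod.fst_add, Prod.snd_add, Prod.smul_fst, Prod.smul_snd,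
    smul_eq_mul]
  ring

lemma convex_geSet' (v : Pt) (c : ℝ) : Convex ℝ {q : Pt | c ≤ pcross v q} := by
  intro q1 h1 q2 h2 a b ha hb hab
  simp only [Set.mem_setOf_eq] at *
  rw [pcross_combo]
  have hc : c = a * c + b * c := by rw [← add_mul, hab, one_mul]
  linarith [mul_le_mul_of_nonneg_left h1 ha, mul_le_mul_of_nonneg_left h2 hb]

lemma convex_leSet' (v : Pt) (c : ℝ) : Convex ℝ {q : Pt | pcross v q ≤ c} := by
  intro q1 h1 q2 h2 a b ha hb hab
  simp only [Set.mem_setOf_eq] at *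
  rw [pcross_combo]
  have hc : c = a * c + b * c := by rw [← add_mul, hab, one_mul]
  linarith [mul_le_mul_of_nonneg_left h1 ha, mul_le_mul_of_nonneg_left h2 hb]

/-- a common `(f,α)`-stabbing direction for every pair is a common
`(f,α)`-stabbing direction for all the sets. -/
theorem stmt0 (n : ℕ) (C : Fin n → Set Pt)
    (hcomp : ∀ i, IsCompact (C i)) (hconv : ∀ i, Convex ℝ (C i))
    (f : Set Pt → ℝ) (hf : MonoConvex f) (α : ℝ)
    (v : Pt) (hv : ‖v‖ = 1)
    (hpair : ∀ i j : Fin n, ∃ ℓ : DLine, ℓ.v = v ∧ Stabs f α ℓ (C i) ∧ Stabs f α ℓ (C j)) :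
    ∃ ℓ : DLine, ℓ.v = v ∧ ∀ i, Stabs f α ℓ (C i) := by
  have hv0 : v ≠ 0 := by intro h; rw [h] at hv; simp at hv
  have hLc : ∀ c : ℝ, (mkLine v hv0 c).left = {q : Pt | c ≤ pcross v q} := by
    intro c
    rw [left_eq', show (mkLine v hv0 c).v = v from rfl, pcross_mkLine_p v hv0 c]
  have hRc : ∀ c : ℝ, (mkLine v hv0 c).right = {q : Pt | pcross v q ≤ c} := by
    intro c
    rw [right_eq', show (mkLine v hv0 c).v = v from rfl, pcross_mkLine_p v hv0 c]
  set S : Fin n → Set ℝ := fun i => {c | Stabs f α (mkLine v hv0 c) (C i)} with hS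
  have hither : ∀ (ℓ : DLine), ℓ.v = v → ∀ i, Stabs f α ℓ (C i) →
      pcross v ℓ.p ∈ S i := by
    intro ℓ hℓ i hst
    have hl : (mkLine v hv0 (pcross v ℓ.p)).left = ℓ.left := by
      rw [hLc, left_eq', hℓ]
    have hr : (mkLine v hv0 (pcross v ℓ.p)).right = ℓ.right := by
      rw [hRc, right_eq', hℓ]
    show Stabs f α _ _
    unfold Stabs at hst ⊢
    rw [hl, hr]
    exact hst
  have hSconv : ∀ i (c1 c2 c : ℝ), c1 ∈ S i → c2 ∈ S i → c1 ≤ c → c ≤ c2 → c ∈ S i := by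
    intro i c1 c2 c h1 h2 h12 h2c
    have hcL : Convex ℝ ((mkLine v hv0 c).left ∩ C i) := by
      rw [hLc]; exact (convex_geSet' v c).inter (hconv i)
    have hcR : Convex ℝ ((mkLine v hv0 c).right ∩ C i) := by
      rw [hRc]; exact (convex_leSet' v c).inter (hconv i)
    have hc2L : Convex ℝ ((mkLine v hv0 c2).left ∩ C i) := by
      rw [hLc]; exact (convex_geSet' v c2).inter (hconv i)
    have hc1R : Convex ℝ ((mkLine v hv0 c1).right ∩ C i) := by
      rw [hRc]; exact (convex_leSet' v c1).inter (hconv i)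
    constructor
    · refine le_trans h2.1 (hf _ _ hc2L hcL ?_)
      rw [hLc, hLc]
      exact Set.inter_subset_inter_left _ (fun q hq => le_trans h2c hq)
    · refine le_trans h1.2 (hf _ _ hc1R hcR ?_)
      rw [hRc, hRc]
      exact Set.inter_subset_inter_left _ (fun q hq => le_trans hq h12)
  rcases Nat.eq_zero_or_pos n with hn | hn
  · subst hn
    exact ⟨mkLine v hv0 0, rfl, fun i => i.elim0⟩
  haveI : Nonempty (Fin n) := ⟨⟨0, hn⟩⟩
  have hcex : ∀ i j, ∃ c : ℝ, c ∈ S i ∧ c ∈ S j := by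
    intro i j
    obtain ⟨ℓ, hℓv, h1, h2⟩ := hpair i j
    exact ⟨pcross v ℓ.p, hither ℓ hℓv i h1, hither ℓ hℓv j h2⟩
  choose t ht1 ht2 using hcex
  set L : Fin n → ℝ := fun i => Finset.univ.inf' Finset.univ_nonempty (t i) with hL
  have hLmem : ∀ i, L i ∈ S i := by
    intro i
    obtain ⟨j, _, hj⟩ := Finset.exists_mem_eq_inf' Finset.univ_nonempty (t i)
    rw [show L i = t i j from hj]
    exact ht1 i j
  set M : ℝ := Finset.univ.sup' Finset.univ_nonempty L with hM
  obtain ⟨i0, _, hi0⟩ := Finset.exists_mem_eq_sup' Finset.univ_nonempty L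
  refine ⟨mkLine v hv0 M, rfl, fun j => ?_⟩
  have h1 : L j ≤ M := Finset.le_sup' L (Finset.mem_univ j)
  have h2 : M ≤ t i0 j := by
    rw [hM, hi0]
    exact Finset.inf'_le (t i0) (Finset.mem_univ j)
  exact hSconv j (L j) (t i0 j) M (hLmem j) (ht2 i0 j) h1 h2
end
end

section
/- Let A, B, C be pairwise disjoint compact convex sets in ℝ², f a monotone function on convex sets, and α ∈ ℝ. Suppose there is a line ℓ such that f(ℓ⁺(A)) < α, f(ℓ⁻(B)) < α, and f(ℓ⁺(C)) < α (i.e., ℓ is an (f,α)-separation line with A and C on one side and B on the other). Then there is no directed line m that is an (f,α)-stabber of all of A, B, C and intersects them in the order A, B, C. -/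
open MeasureTheory TopologicalSpace
open scoped Classical

noncomputable section

lemma pt_comb (m : DLine) (θ a b : ℝ) :
    θ • m.pt a + (1 - θ) • m.pt b = m.pt (θ * a + (1 - θ) * b) := by
  simp only [DLine.pt, Prod.ext_iff, Prod.fst_add, Prod.snd_add, Prod.smul_fst, Prod.smul_snd,
    smul_eq_mul]
  constructor <;> ring

lemma pt_mem (m : DLine) (S : Set Pt) (hS : Convex ℝ S) {a b c : ℝ}
    (ha : m.pt a ∈ S) (hb : m.pt b ∈ S) (h1 : a ≤ c) (h2 : c ≤ b) : m.pt c ∈ S := by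
  rcases eq_or_lt_of_le (h1.trans h2) with h | h
  · have : a = c := le_antisymm h1 (h ▸ h2)
    exact this ▸ ha
  · set θ : ℝ := (b - c) / (b - a) with hθdef
    have hba : (0:ℝ) < b - a := by linarith
    have hθ0 : (0:ℝ) ≤ θ := div_nonneg (by linarith) hba.le
    have hθ1 : (0:ℝ) ≤ 1 - θ := by
      have : θ ≤ 1 := by
        rw [div_le_one hba]; linarith
      linarith
    have hc : θ * a + (1 - θ) * b = c := by
      rw [hθdef]
      field_simp
      ring
    have := hS ha hb hθ0 hθ1 (by ring)
    rwa [pt_comb, hc] at this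

lemma pcross_comb (v p x y : Pt) (θ : ℝ) (h : θ + (1 - θ) = 1) :
    pcross v (θ • x + (1 - θ) • y - p) =
      θ * pcross v (x - p) + (1 - θ) * pcross v (y - p) := by
  simp only [pcross, Prod.fst_add, Prod.snd_add, Prod.fst_sub, Prod.snd_sub,
    Prod.smul_fst, Prod.smul_snd, smul_eq_mul]
  ring

lemma left_convex (m : DLine) : Convex ℝ m.left := by
  intro x hx y hy a b ha hb hab
  simp only [DLine.left, Set.mem_setOf_eq] at *
  have hb' : b = 1 - a := by linarith
  subst hb'
  rw [pcross_comb m.v m.p x y a (by ring)]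
  positivity

lemma right_convex (m : DLine) : Convex ℝ m.right := by
  intro x hx y hy a b ha hb hab
  simp only [DLine.right, Set.mem_setOf_eq] at *
  have hb' : b = 1 - a := by linarith
  subst hb'
  rw [pcross_comb m.v m.p x y a (by ring)]
  nlinarith

lemma param_exists (m : DLine) {x : Pt} (hx : pcross m.v (x - m.p) = 0) :
    ∃ τ : ℝ, m.pt τ = x := by
  have hD : m.v.1 ^ 2 + m.v.2 ^ 2 ≠ 0 := by
    intro h
    apply m.hv
    have h1 : m.v.1 = 0 := by nlinarith [sq_nonneg m.v.1, sq_nonneg m.v.2]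
    have h2 : m.v.2 = 0 := by nlinarith [sq_nonneg m.v.1, sq_nonneg m.v.2]
    exact Prod.ext h1 h2
  refine ⟨((x.1 - m.p.1) * m.v.1 + (x.2 - m.p.2) * m.v.2) / (m.v.1 ^ 2 + m.v.2 ^ 2), ?_⟩
  simp only [pcross, Prod.fst_sub, Prod.snd_sub] at hx
  simp only [DLine.pt, Prod.ext_iff, Prod.fst_add, Prod.snd_add, Prod.smul_fst, Prod.smul_snd,
    smul_eq_mul]
  constructor
  · field_simp
    linear_combination m.v.2 * hx
  · field_simp
    linear_combination (-m.v.1) * hx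

/-- From a stabbing and a separation `f(ℓ.left ∩ S) < α`, produce a point of `S`
on the line `m` strictly to the right of `ℓ`. -/
lemma comb_neg {a b θ : ℝ} (hθ0 : 0 ≤ θ) (hθ1 : θ ≤ 1) (ha : a < 0) (hb : b < 0) :
    θ * a + (1 - θ) * b < 0 := by
  rcases eq_or_lt_of_le hθ0 with h | h
  · rw [← h]; simpa using hb
  · have h1 : θ * a < 0 := mul_neg_of_pos_of_neg h ha
    have h2 : (1 - θ) * b ≤ 0 := mul_nonpos_of_nonneg_of_nonpos (by linarith) hb.le
    linarith

lemma key_lemma (f : Set Pt → ℝ) (hf : MonoConvex f) (α : ℝ) (ℓ m : DLine)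
    (S : Set Pt) (hS : Convex ℝ S) (hstab : Stabs f α m S)
    (hsep : f (ℓ.left ∩ S) < α) :
    ∃ τ : ℝ, m.pt τ ∈ S ∧ pcross ℓ.v (m.pt τ - ℓ.p) < 0 := by
  have hL : ¬ (m.left ∩ S ⊆ ℓ.left ∩ S) := by
    intro hsub
    have := hf (m.left ∩ S) (ℓ.left ∩ S) ((left_convex m).inter hS)
      ((left_convex ℓ).inter hS) hsub
    linarith [hstab.1]
  have hR : ¬ (m.right ∩ S ⊆ ℓ.left ∩ S) := by
    intro hsub
    have := hf (m.right ∩ S) (ℓ.left ∩ S) ((right_convex m).inter hS)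
      ((left_convex ℓ).inter hS) hsub
    linarith [hstab.2]
  obtain ⟨x, hx, hx'⟩ := Set.not_subset.1 hL
  obtain ⟨y, hy, hy'⟩ := Set.not_subset.1 hR
  have hxS : x ∈ S := hx.2
  have hyS : y ∈ S := hy.2
  have hxℓ : pcross ℓ.v (x - ℓ.p) < 0 := by
    by_contra h
    exact hx' ⟨le_of_not_gt h, hxS⟩
  have hyℓ : pcross ℓ.v (y - ℓ.p) < 0 := by
    by_contra h
    exact hy' ⟨le_of_not_gt h, hyS⟩
  have hxm : 0 ≤ pcross m.v (x - m.p) := hx.1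
  have hym : pcross m.v (y - m.p) ≤ 0 := hy.1
  -- find crossing point on segment [x, y]
  set g1 := pcross m.v (x - m.p) with hg1
  set g2 := pcross m.v (y - m.p) with hg2
  by_cases hg : g1 - g2 = 0
  · -- then g1 = g2 = 0, take x itself
    have hx0 : pcross m.v (x - m.p) = 0 := by
      have : g1 = g2 := by linarith
      linarith [hxm, hym, this]
    obtain ⟨τ, hτ⟩ := param_exists m hx0
    exact ⟨τ, hτ ▸ hxS, hτ ▸ hxℓ⟩
  · have hgpos : 0 < g1 - g2 := lt_of_le_of_ne (by linarith) (Ne.symm hg)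
    set θ : ℝ := -g2 / (g1 - g2) with hθdef
    have hθ0 : (0:ℝ) ≤ θ := div_nonneg (by linarith) hgpos.le
    have hθ1 : (0:ℝ) ≤ 1 - θ := by
      have : θ ≤ 1 := by rw [div_le_one hgpos]; linarith
      linarith
    set z : Pt := θ • x + (1 - θ) • y with hzdef
    have hzS : z ∈ S := hS hxS hyS hθ0 hθ1 (by ring)
    have hzm : pcross m.v (z - m.p) = 0 := by
      rw [hzdef, pcross_comb m.v m.p x y θ (by ring), ← hg1, ← hg2, hθdef]
      field_simp
      ring
    have hzℓ : pcross ℓ.v (z - ℓ.p) < 0 := by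
      rw [hzdef, pcross_comb ℓ.v ℓ.p x y θ (by ring)]
      exact comb_neg hθ0 (by linarith) hxℓ hyℓ
    obtain ⟨τ, hτ⟩ := param_exists m hzm
    exact ⟨τ, hτ ▸ hzS, hτ ▸ hzℓ⟩

lemma order_lemma (m : DLine) (S T : Set Pt) (hS : Convex ℝ S) (hT : Convex ℝ T)
    (hd : Disjoint S T) {s t x y : ℝ}
    (hs : m.pt s ∈ S) (ht : m.pt t ∈ T) (hst : s ≤ t)
    (hx : m.pt x ∈ S) (hy : m.pt y ∈ T) : x ≤ y := by
  by_contra h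
  push_neg at h
  rcases le_or_gt t x with h1 | h1
  · exact Set.disjoint_left.1 hd (pt_mem m S hS hs hx hst h1) ht
  · exact Set.disjoint_left.1 hd hx (pt_mem m T hT hy ht h.le h1.le)

lemma pt_affine (ℓ m : DLine) (τ : ℝ) :
    pcross ℓ.v (m.pt τ - ℓ.p) =
      pcross ℓ.v (m.p - ℓ.p) + τ * pcross ℓ.v m.v := by
  simp only [pcross, DLine.pt, Prod.fst_add, Prod.snd_add, Prod.fst_sub, Prod.snd_sub,
    Prod.smul_fst, Prod.smul_snd, smul_eq_mul]
  ring

/-- an `(f,α)`-separation line with `A` and `C` on one side and `B` on the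
other precludes an in-order `(f,α)`-transversal of disjoint sets. -/
theorem stmt1 (A B C : Set Pt)
    (hAcp : IsCompact A) (hBcp : IsCompact B) (hCcp : IsCompact C)
    (hAcv : Convex ℝ A) (hBcv : Convex ℝ B) (hCcv : Convex ℝ C)
    (hAB : Disjoint A B) (hAC : Disjoint A C) (hBC : Disjoint B C)
    (f : Set Pt → ℝ) (hf : MonoConvex f) (α : ℝ)
    (ℓ : DLine) (h1 : f (ℓ.left ∩ A) < α) (h2 : f (ℓ.right ∩ B) < α)
    (h3 : f (ℓ.left ∩ C) < α) :
    ¬ ∃ m : DLine, Stabs f α m A ∧ Stabs f α m B ∧ Stabs f α m C ∧ Meets3 m A B C := by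
  rintro ⟨m, hmA, hmB, hmC, s, t, u, hst, htu, hsA, htB, huC⟩
  -- points of A and C on line m strictly right of ℓ
  obtain ⟨τA, hτA, hgA⟩ := key_lemma f hf α ℓ m A hAcv hmA h1
  obtain ⟨τC, hτC, hgC⟩ := key_lemma f hf α ℓ m C hCcv hmC h3
  -- point of B on line m strictly left of ℓ, via the reversed line
  have hnv : -ℓ.v ≠ 0 := neg_ne_zero.2 ℓ.hv
  set ℓ' : DLine := ⟨ℓ.p, -ℓ.v, hnv⟩ with hℓ'
  have hleft : ℓ'.left = ℓ.right := by
    ext q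
    simp only [DLine.left, DLine.right, Set.mem_setOf_eq, hℓ', pcross, Prod.fst_neg,
      Prod.snd_neg]
    constructor <;> intro h <;> nlinarith
  obtain ⟨τB, hτB, hgB'⟩ := key_lemma f hf α ℓ' m B hBcv hmB (by rw [hleft]; exact h2)
  have hgB : 0 < pcross ℓ.v (m.pt τB - ℓ.p) := by
    have : pcross ℓ'.v (m.pt τB - ℓ'.p) = -pcross ℓ.v (m.pt τB - ℓ.p) := by
      simp only [hℓ', pcross, Prod.fst_neg, Prod.snd_neg]
      ring
    rw [this] at hgB'
    linarith
  -- order: τA ≤ τB ≤ τC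
  have hAB' : τA ≤ τB := order_lemma m A B hAcv hBcv hAB hsA htB hst hτA hτB
  have hBC' : τB ≤ τC := order_lemma m B C hBcv hCcv hBC htB huC htu hτB hτC
  -- affine contradiction
  rw [pt_affine] at hgA hgB hgC
  set c := pcross ℓ.v (m.p - ℓ.p)
  set d := pcross ℓ.v m.v
  rcases eq_or_lt_of_le (hAB'.trans hBC' : τA ≤ τC) with he | hlt
  · have h1 : τA = τB := le_antisymm hAB' (he ▸ hBC')
    rw [← h1] at hgB
    linarith
  · nlinarith [mul_nonneg (by linarith : (0:ℝ) ≤ τC - τB) (by linarith : (0:ℝ) ≤ -(c + τA * d)),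
      mul_nonneg (by linarith : (0:ℝ) ≤ τB - τA) (by linarith : (0:ℝ) ≤ -(c + τC * d)),
      mul_pos (by linarith : (0:ℝ) < τC - τA) hgB]
end
end

section
/- There exist non-disjoint compact convex sets A, B, C in ℝ², a monotone function f on convex sets, a value α, and a line ℓ such that ℓ (f,α)-separates A and C to one side and B to the other (f(ℓ⁺(A)), f(ℓ⁻(B)), f(ℓ⁺(C)) < α), yet there exists a directed line m that is an (f,α)-stabber of all three sets and intersects them in the order A, B, C. Hence disjointness is necessary in the quantitative separation lemma. -/
open MeasureTheory TopologicalSpace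
open scoped Classical

noncomputable section

/-- Auxiliary window for the monotone function. -/
def K0 : Set Pt := Set.Icc (-1) 1 ×ˢ Set.Icc 0 1

/-- The auxiliary monotone function: area inside the window `K0`. -/
def f0 : Set Pt → ℝ := fun S => (volume (S ∩ K0)).toReal

lemma volSK0_ne_top (S : Set Pt) : volume (S ∩ K0) ≠ ⊤ := by
  refine ne_top_of_le_ne_top ?_ (measure_mono Set.inter_subset_right)
  exact ((isCompact_Icc.prod isCompact_Icc).measure_lt_top).ne

lemma f0_mono : MonoConvex f0 := by
  intro A B _ _ hAB
  exact ENNReal.toReal_mono (volSK0_ne_top B)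
    (measure_mono (Set.inter_subset_inter_left _ hAB))

lemma vol_prod_Icc (a b c d : ℝ) :
    volume (Set.Icc a b ×ˢ Set.Icc c d) = ENNReal.ofReal (b - a) * ENNReal.ofReal (d - c) := by
  rw [show (volume : Measure Pt) = (volume : Measure ℝ).prod volume from rfl,
    Measure.prod_prod, Real.volume_Icc, Real.volume_Icc]

lemma f0_lower {a b c d : ℝ} (hab : a ≤ b) (hcd : c ≤ d) {S : Set Pt}
    (h : Set.Icc a b ×ˢ Set.Icc c d ⊆ S ∩ K0) : (b - a) * (d - c) ≤ f0 S := by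
  have h1 : ((b - a) * (d - c) : ℝ) =
      (volume (Set.Icc a b ×ˢ Set.Icc c d)).toReal := by
    rw [vol_prod_Icc, ENNReal.toReal_mul, ENNReal.toReal_ofReal (by linarith),
      ENNReal.toReal_ofReal (by linarith)]
  rw [h1]
  exact ENNReal.toReal_mono (volSK0_ne_top S) (measure_mono h)

lemma f0_null {S : Set Pt} (h : S ∩ K0 ⊆ {(0:ℝ)} ×ˢ (Set.univ : Set ℝ)) : f0 S = 0 := by
  have : volume (S ∩ K0) = 0 := by
    refine measure_mono_null h ?_
    rw [show (volume : Measure Pt) = (volume : Measure ℝ).prod volume from rfl,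
      Measure.prod_prod, Real.volume_singleton, zero_mul]
  simp [f0, this]

/-- without disjointness, an `(f,α)`-separation line with `A`, `C` on one
side and `B` on the other does not preclude an in-order `(f,α)`-transversal. -/
theorem stmt2 :
    ∃ (A B C : Set Pt) (f : Set Pt → ℝ) (α : ℝ) (ℓ m : DLine),
      IsCompact A ∧ IsCompact B ∧ IsCompact C ∧
      Convex ℝ A ∧ Convex ℝ B ∧ Convex ℝ C ∧
      ¬ (Disjoint A B ∧ Disjoint A C ∧ Disjoint B C) ∧
      MonoConvex f ∧
      f (ℓ.left ∩ A) < α ∧ f (ℓ.right ∩ B) < α ∧ f (ℓ.left ∩ C) < α ∧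
      Stabs f α m A ∧ Stabs f α m B ∧ Stabs f α m C ∧ Meets3 m A B C := by
  refine ⟨Set.Icc 0 1 ×ˢ Set.Icc 0 1, Set.Icc (-1) 0 ×ˢ Set.Icc 0 1,
    Set.Icc 0 1 ×ˢ Set.Icc 0 1, f0, 1/2,
    ⟨(0,0), (0,1), by simp [Prod.ext_iff]⟩,
    ⟨(0, 1/2), (1,0), by simp [Prod.ext_iff]⟩,
    isCompact_Icc.prod isCompact_Icc, isCompact_Icc.prod isCompact_Icc,
    isCompact_Icc.prod isCompact_Icc,
    (convex_Icc _ _).prod (convex_Icc _ _), (convex_Icc _ _).prod (convex_Icc _ _),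
    (convex_Icc _ _).prod (convex_Icc _ _), ?_, f0_mono, ?_, ?_, ?_, ?_, ?_, ?_, ?_⟩
  · -- non-disjointness: A = C and both contain (0,0)
    rintro ⟨-, hAC, -⟩
    have h0 : ((0:ℝ),(0:ℝ)) ∈ Set.Icc (0:ℝ) 1 ×ˢ Set.Icc (0:ℝ) 1 :=
      ⟨by norm_num, by norm_num⟩
    exact hAC.ne_of_mem h0 h0 rfl
  · -- f0 (ℓ.left ∩ A) < 1/2
    rw [f0_null ?_]; · norm_num
    rintro ⟨x, y⟩ ⟨⟨hl, ⟨hx, -⟩⟩, -⟩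
    simp only [DLine.left, pcross, Set.mem_setOf_eq] at hl
    have : x ≤ 0 := by simp at hl; simpa using hl
    constructor
    · simp only [Set.mem_singleton_iff]; exact le_antisymm this hx.1
    · trivial
  · -- f0 (ℓ.right ∩ B) < 1/2
    rw [f0_null ?_]; · norm_num
    rintro ⟨x, y⟩ ⟨⟨hl, ⟨hx, -⟩⟩, -⟩
    simp only [DLine.right, pcross, Set.mem_setOf_eq] at hl
    have : 0 ≤ x := by simp at hl; simpa using hl
    constructor
    · simp only [Set.mem_singleton_iff]; exact le_antisymm hx.2 this
    · trivial
  · -- f0 (ℓ.left ∩ C) < 1/2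
    rw [f0_null ?_]; · norm_num
    rintro ⟨x, y⟩ ⟨⟨hl, ⟨hx, -⟩⟩, -⟩
    simp only [DLine.left, pcross, Set.mem_setOf_eq] at hl
    have : x ≤ 0 := by simp at hl; simpa using hl
    constructor
    · simp only [Set.mem_singleton_iff]; exact le_antisymm this hx.1
    · trivial
  · -- Stabs m A
    constructor
    · refine le_trans (by norm_num) (f0_lower (a := 0) (b := 1) (c := 1/2) (d := 1) (by norm_num) (by norm_num) ?_)
      rintro ⟨x, y⟩ ⟨hx, hy⟩
      refine ⟨⟨?_, ⟨hx, ?_⟩⟩, ?_, ?_⟩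
      · simp only [DLine.left, pcross, Set.mem_setOf_eq]; simp; linarith [hy.1]
      · exact ⟨le_trans (by norm_num) hy.1, hy.2⟩
      · exact ⟨le_trans (by norm_num) hx.1, hx.2⟩
      · exact ⟨le_trans (by norm_num) hy.1, hy.2⟩
    · refine le_trans (by norm_num) (f0_lower (a := 0) (b := 1) (c := 0) (d := 1/2) (by norm_num) (by norm_num) ?_)
      rintro ⟨x, y⟩ ⟨hx, hy⟩
      refine ⟨⟨?_, ⟨hx, ?_⟩⟩, ?_, ?_⟩
      · simp only [DLine.right, pcross, Set.mem_setOf_eq]; simp; linarith [hy.2]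
      · exact ⟨hy.1, le_trans hy.2 (by norm_num)⟩
      · exact ⟨le_trans (by norm_num) hx.1, hx.2⟩
      · exact ⟨hy.1, le_trans hy.2 (by norm_num)⟩
  · -- Stabs m B
    constructor
    · refine le_trans (by norm_num) (f0_lower (a := -1) (b := 0) (c := 1/2) (d := 1) (by norm_num) (by norm_num) ?_)
      rintro ⟨x, y⟩ ⟨hx, hy⟩
      refine ⟨⟨?_, ⟨hx, ?_⟩⟩, ?_, ?_⟩
      · simp only [DLine.left, pcross, Set.mem_setOf_eq]; simp; linarith [hy.1]
      · exact ⟨le_trans (by norm_num) hy.1, hy.2⟩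
      · exact ⟨hx.1, le_trans hx.2 (by norm_num)⟩
      · exact ⟨le_trans (by norm_num) hy.1, hy.2⟩
    · refine le_trans (by norm_num) (f0_lower (a := -1) (b := 0) (c := 0) (d := 1/2) (by norm_num) (by norm_num) ?_)
      rintro ⟨x, y⟩ ⟨hx, hy⟩
      refine ⟨⟨?_, ⟨hx, ?_⟩⟩, ?_, ?_⟩
      · simp only [DLine.right, pcross, Set.mem_setOf_eq]; simp; linarith [hy.2]
      · exact ⟨hy.1, le_trans hy.2 (by norm_num)⟩
      · exact ⟨hx.1, le_trans hx.2 (by norm_num)⟩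
      · exact ⟨hy.1, le_trans hy.2 (by norm_num)⟩
  · -- Stabs m C
    constructor
    · refine le_trans (by norm_num) (f0_lower (a := 0) (b := 1) (c := 1/2) (d := 1) (by norm_num) (by norm_num) ?_)
      rintro ⟨x, y⟩ ⟨hx, hy⟩
      refine ⟨⟨?_, ⟨hx, ?_⟩⟩, ?_, ?_⟩
      · simp only [DLine.left, pcross, Set.mem_setOf_eq]; simp; linarith [hy.1]
      · exact ⟨le_trans (by norm_num) hy.1, hy.2⟩
      · exact ⟨le_trans (by norm_num) hx.1, hx.2⟩
      · exact ⟨le_trans (by norm_num) hy.1, hy.2⟩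
    · refine le_trans (by norm_num) (f0_lower (a := 0) (b := 1) (c := 0) (d := 1/2) (by norm_num) (by norm_num) ?_)
      rintro ⟨x, y⟩ ⟨hx, hy⟩
      refine ⟨⟨?_, ⟨hx, ?_⟩⟩, ?_, ?_⟩
      · simp only [DLine.right, pcross, Set.mem_setOf_eq]; simp; linarith [hy.2]
      · exact ⟨hy.1, le_trans hy.2 (by norm_num)⟩
      · exact ⟨le_trans (by norm_num) hx.1, hx.2⟩
      · exact ⟨hy.1, le_trans hy.2 (by norm_num)⟩
  · -- Meets3
    refine ⟨0, 0, 0, le_refl _, le_refl _, ?_, ?_, ?_⟩ <;>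
      · simp only [DLine.pt]
        constructor <;> norm_num
end
end

section
/- Let C₁ and C₂ be disjoint compact convex sets in ℝ², f monotone with f(Cᵢ) ≥ α and f(∅) < α. If a direction v is an (f,α)-stabbing direction for the pair (C₁, C₂) with C₁ intersected before C₂ along the line, then the opposite direction −v is an (f,α)-stabbing direction only in the order (C₂, C₁); consequently the set of directions in S¹ that (f,α)-stab C₁ and C₂ in the order (C₁, C₂) is contained in an open half-circle (has angular measure at most 180°). -/
open MeasureTheory TopologicalSpace
open scoped Classical

noncomputable section

/-- for two disjoint sets, reversing the direction reverses the stabbing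
order, and the directions stabbing in order `(C₁, C₂)` lie in an open half-circle. -/
theorem stmt9 (C₁ C₂ : Set Pt) (h₁ : IsCompact C₁) (h₂ : IsCompact C₂)
    (hc₁ : Convex ℝ C₁) (hc₂ : Convex ℝ C₂) (hdisj : Disjoint C₁ C₂)
    (f : Set Pt → ℝ) (hf : MonoConvex f) (α : ℝ)
    (hα₁ : α ≤ f C₁) (hα₂ : α ≤ f C₂) (hemp : f ∅ < α) :
    (∀ v : Pt, v ≠ 0 →
      (∃ ℓ : DLine, ℓ.v = v ∧ Stabs f α ℓ C₁ ∧ Stabs f α ℓ C₂ ∧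
        ∃ s t : ℝ, s ≤ t ∧ ℓ.pt s ∈ C₁ ∧ ℓ.pt t ∈ C₂) →
      ¬ ∃ ℓ : DLine, ℓ.v = -v ∧ Stabs f α ℓ C₁ ∧ Stabs f α ℓ C₂ ∧
        ∃ s t : ℝ, s ≤ t ∧ ℓ.pt s ∈ C₁ ∧ ℓ.pt t ∈ C₂) ∧
    ∃ w : Pt, w ≠ 0 ∧ ∀ v : Pt, ‖v‖ = 1 →
      (∃ ℓ : DLine, ℓ.v = v ∧ Stabs f α ℓ C₁ ∧ Stabs f α ℓ C₂ ∧
        ∃ s t : ℝ, s ≤ t ∧ ℓ.pt s ∈ C₁ ∧ ℓ.pt t ∈ C₂) →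
      0 < w.1 * v.1 + w.2 * v.2 := by

  -- Both sets are nonempty, since f(∅) < α ≤ f(Cᵢ).
  have hne₁ : C₁.Nonempty := by
    rw [Set.nonempty_iff_ne_empty]; rintro rfl; linarith
  have hne₂ : C₂.Nonempty := by
    rw [Set.nonempty_iff_ne_empty]; rintro rfl; linarith
  -- Strictly separate C₁ and C₂ by a continuous linear functional g.
  obtain ⟨g, u₀, v₀, hgu, huv, hgv⟩ :=
    geometric_hahn_banach_compact_closed hc₁ h₁ hc₂ h₂.isClosed hdisj
  -- Key: any directed line meeting C₁ before C₂ has g of its direction positive.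
  have key : ∀ ℓ : DLine, (∃ s t : ℝ, s ≤ t ∧ ℓ.pt s ∈ C₁ ∧ ℓ.pt t ∈ C₂) → 0 < g ℓ.v := by
    rintro ℓ ⟨s, t, hst, hs, ht⟩
    have h1 : g (ℓ.pt s) < u₀ := hgu _ hs
    have h2 : v₀ < g (ℓ.pt t) := hgv _ ht
    have e1 : g (ℓ.pt s) = g ℓ.p + s * g ℓ.v := by
      simp [DLine.pt, map_add, _root_.map_smul]
    have e2 : g (ℓ.pt t) = g ℓ.p + t * g ℓ.v := by
      simp [DLine.pt, map_add, _root_.map_smul]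
    have hlt : g ℓ.p + s * g ℓ.v < g ℓ.p + t * g ℓ.v := by
      rw [← e1, ← e2]; linarith
    nlinarith [hlt, hst]
  constructor
  · rintro v hv ⟨ℓ, hℓv, -, -, hmeet⟩ ⟨ℓ', hℓ'v, -, -, hmeet'⟩
    have hp : 0 < g v := hℓv ▸ key ℓ hmeet
    have hn : 0 < g (-v) := hℓ'v ▸ key ℓ' hmeet'
    rw [map_neg] at hn
    linarith
  · refine ⟨(g (1, 0), g (0, 1)), ?_, ?_⟩
    · intro hw0
      have hx : g ((1 : ℝ), (0 : ℝ)) = 0 := congrArg Prod.fst hw0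
      have hy : g ((0 : ℝ), (1 : ℝ)) = 0 := congrArg Prod.snd hw0
      have hall : ∀ p : Pt, g p = 0 := by
        intro p
        have hdecomp : p = p.1 • ((1 : ℝ), (0 : ℝ)) + p.2 • ((0 : ℝ), (1 : ℝ)) := by
          simp [Prod.ext_iff]
        rw [hdecomp, map_add, g.map_smul, g.map_smul, hx, hy]
        simp
      obtain ⟨a, ha⟩ := hne₁
      obtain ⟨b, hb⟩ := hne₂
      have := hgu a ha
      have := hgv b hb
      rw [hall a] at *
      rw [hall b] at *
      linarith
    · rintro v hv ⟨ℓ, hℓv, -, -, hmeet⟩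
      have hp : 0 < g v := hℓv ▸ key ℓ hmeet
      have hdecomp : v = v.1 • ((1 : ℝ), (0 : ℝ)) + v.2 • ((0 : ℝ), (1 : ℝ)) := by
        simp [Prod.ext_iff]
      have : g v = v.1 * g ((1 : ℝ), (0 : ℝ)) + v.2 * g ((0 : ℝ), (1 : ℝ)) := by
        conv_lhs => rw [hdecomp, map_add, g.map_smul, g.map_smul]
        simp
      simp only []
      nlinarith [hp, this]
end
end

section
/- If x and y are colored sign vectors (entries in {−1, 0, 1}, each coordinate colored red, green, or blue) with x ≺ y (meaning xᵢ ≠ 0 implies xᵢ = yᵢ for all i), and both x and y are balanced and Hadwiger, then the first nonzero entry of x equals the first nonzero entry of y (or both vectors are identically zero). -/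
open MeasureTheory TopologicalSpace
open scoped Classical

noncomputable section

/-- Sign-pair normalization helper. -/
lemma signPair14 (t a b : ℤ) (ht : t = 1 ∨ t = -1)
    (h : (a = 1 ∧ b = -1) ∨ (a = -1 ∧ b = 1)) :
    (a = t ∧ b = -t) ∨ (a = -t ∧ b = t) := by
  rcases ht with rfl | rfl <;> rcases h with ⟨h1, h2⟩ | ⟨h1, h2⟩ <;> omega

/-- Forbidden pattern helper, `(t, -t, t)` form. -/
lemma pat14 {t a b c : ℤ} (ht : t = 1 ∨ t = -1)
    (ha : a = t) (hb : b = -t) (hc : c = t) :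
    (a = -1 ∧ b = 1 ∧ c = -1) ∨ (a = 1 ∧ b = -1 ∧ c = 1) := by
  subst ha hb hc; rcases ht with rfl | rfl <;> norm_num

/-- Forbidden pattern helper, `(-t, t, -t)` form. -/
lemma pat14' {t a b c : ℤ} (ht : t = 1 ∨ t = -1)
    (ha : a = -t) (hb : b = t) (hc : c = -t) :
    (a = -1 ∧ b = 1 ∧ c = -1) ∨ (a = 1 ∧ b = -1 ∧ c = 1) := by
  subst ha hb hc; rcases ht with rfl | rfl <;> norm_num

/-- Key combinatorial claim: in a balanced Hadwiger vector with first nonzero entry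
`t` at position `i`, for every color `c'` there is a pair `p < q` with values `t, -t`
whose colors are distinct and both different from `c'`. -/
lemma claim14 {n : ℕ} (x : Fin n → ℤ) (color : Fin n → Fin 3)
    (hbx : BalancedVec x color) (hhx : HadwigerVec x color)
    (i : Fin n) (t : ℤ) (ht : t = 1 ∨ t = -1) (hxi : x i = t)
    (hmin : ∀ k, k < i → x k = 0) (c' : Fin 3) :
    ∃ p q : Fin n, p < q ∧ x p = t ∧ x q = -t ∧
      color p ≠ c' ∧ color q ≠ c' ∧ color p ≠ color q := by
  have htz : t ≠ 0 := by rcases ht with rfl | rfl <;> norm_num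
  have htz' : -t ≠ 0 := neg_ne_zero.mpr htz
  have h2t : t ≠ -t := by rcases ht with rfl | rfl <;> norm_num
  have hmin' : ∀ k : Fin n, x k ≠ 0 → i ≤ k :=
    fun k hk => le_of_not_gt (fun h => hk (hmin k h))
  obtain ⟨d, e, hde, hdc, hec⟩ : ∃ d e : Fin 3, d ≠ e ∧ d ≠ c' ∧ e ≠ c' := by
    revert c'; decide
  obtain ⟨a, b, hca, hcb, hab⟩ := hbx d e hde
  have habs : ∃ A B : Fin n, x A = t ∧ x B = -t ∧ color A ≠ c' ∧ color B ≠ c' ∧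
      color A ≠ color B := by
    rcases signPair14 t (x a) (x b) ht hab with ⟨h1, h2⟩ | ⟨h1, h2⟩
    · exact ⟨a, b, h1, h2, hca ▸ hdc, hcb ▸ hec, by rw [hca, hcb]; exact hde⟩
    · exact ⟨b, a, h2, h1, hcb ▸ hec, hca ▸ hdc, by rw [hca, hcb]; exact hde.symm⟩
  obtain ⟨A, B, hxA, hxB, hAc, hBc, hAB⟩ := habs
  have hiB : i < B := lt_of_le_of_ne (hmin' B (hxB ▸ htz'))
    (fun heq => by rw [heq] at hxi; exact h2t (hxi.symm.trans hxB))
  rcases lt_trichotomy A B with h | h | h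
  · exact ⟨A, B, h, hxA, hxB, hAc, hBc, hAB⟩
  · rw [h] at hxA; exact absurd (hxA.symm.trans hxB) h2t
  · -- B < A
    by_cases hci : color i = color B
    · -- hard case: first entry has the color of the `-t` witness
      obtain ⟨w, z, hcw, hcz, hwz⟩ := hbx c' (color A) (fun h => hAc h.symm)
      rcases signPair14 t (x w) (x z) ht hwz with ⟨hw, hz⟩ | ⟨hw, hz⟩
      · -- x w = t (color c'), x z = -t (color A)
        have hiw : i < w := lt_of_le_of_ne (hmin' w (hw ▸ htz))
          (fun heq => hBc (by rw [← hci, heq, hcw]))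
        have hiz : i < z := lt_of_le_of_ne (hmin' z (hz ▸ htz'))
          (fun heq => by rw [heq] at hxi; exact h2t (hxi.symm.trans hz))
        rcases lt_trichotomy z w with hzw | hzw | hzw
        · exact absurd (pat14 ht hxi hz hw) (hhx i z w hiz hzw
            (by rw [hci, hcz]; exact fun h => hAB h.symm)
            (by rw [hci, hcw]; exact hBc)
            (by rw [hcz, hcw]; exact hAc))
        · rw [hzw] at hz; exact absurd (hw.symm.trans hz) h2t
        · rcases lt_trichotomy B w with hBw | hBw | hBw
          · exact absurd (pat14' ht hxB hw hz) (hhx B w z hBw hzw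
              (by rw [hcw]; exact hBc)
              (by rw [hcz]; exact fun h => hAB h.symm)
              (by rw [hcw, hcz]; exact fun h => hAc h.symm))
          · rw [hBw] at hxB; exact absurd (hw.symm.trans hxB) h2t
          · exact absurd (pat14 ht hw hxB hxA) (hhx w B A hBw h
              (by rw [hcw]; exact fun h => hBc h.symm)
              (by rw [hcw]; exact fun h => hAc h.symm)
              (fun h => hAB h.symm))
      · -- x w = -t (color c'), x z = t (color A)
        have hiw : i < w := lt_of_le_of_ne (hmin' w (hw ▸ htz'))
          (fun heq => by rw [heq] at hxi; exact h2t (hxi.symm.trans hw))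
        rcases lt_trichotomy w A with hwA | hwA | hwA
        · exact absurd (pat14 ht hxi hw hxA) (hhx i w A hiw hwA
            (by rw [hci, hcw]; exact hBc)
            (by rw [hci]; exact fun h => hAB h.symm)
            (by rw [hcw]; exact fun h => hAc h.symm))
        · exact absurd (show color A = c' by rw [← hwA]; exact hcw) hAc
        · exact absurd (pat14' ht hxB hxA hw) (hhx B A w h hwA
            (fun h => hAB h.symm)
            (by rw [hcw]; exact hBc)
            (by rw [hcw]; exact hAc))
    · by_cases hci2 : color i = color A
      · exact ⟨i, B, hiB, hxi, hxB, by rw [hci2]; exact hAc, hBc,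
          by rw [hci2]; exact hAB⟩
      · exact absurd (pat14 ht hxi hxB hxA) (hhx i B A hiB h hci hci2 hAB.symm)

/-- if `x ≺ y` are balanced Hadwiger colored sign vectors, then their
first nonzero entries coincide (or both vectors are identically zero). -/
theorem stmt14 (n : ℕ) (x y : Fin n → ℤ) (color : Fin n → Fin 3)
    (hx : ∀ i, x i = -1 ∨ x i = 0 ∨ x i = 1)
    (hy : ∀ i, y i = -1 ∨ y i = 0 ∨ y i = 1)
    (hprec : ∀ i, x i ≠ 0 → y i = x i)
    (hbx : BalancedVec x color) (hby : BalancedVec y color)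
    (hhx : HadwigerVec x color) (hhy : HadwigerVec y color) :
    (∀ i, x i = 0 ∧ y i = 0) ∨
      ∃ i j : Fin n, x i ≠ 0 ∧ (∀ k, k < i → x k = 0) ∧
        y j ≠ 0 ∧ (∀ k, k < j → y k = 0) ∧ x i = y j := by
  have hxne : ∃ i, x i ≠ 0 := by
    obtain ⟨a, b, -, -, hab⟩ := hbx 0 1 (by decide)
    exact ⟨a, by rcases hab with ⟨h, -⟩ | ⟨h, -⟩ <;> omega⟩
  have hyne : ∃ i, y i ≠ 0 := by
    obtain ⟨a, b, -, -, hab⟩ := hby 0 1 (by decide)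
    exact ⟨a, by rcases hab with ⟨h, -⟩ | ⟨h, -⟩ <;> omega⟩
  obtain ⟨i0, hi0⟩ := hxne
  obtain ⟨j0, hj0⟩ := hyne
  obtain ⟨i, hi, hi_min⟩ := Finset.exists_min_image
    (Finset.univ.filter fun k => x k ≠ 0) id ⟨i0, by simp [hi0]⟩
  obtain ⟨j, hj, hj_min⟩ := Finset.exists_min_image
    (Finset.univ.filter fun k => y k ≠ 0) id ⟨j0, by simp [hj0]⟩
  simp only [Finset.mem_filter, Finset.mem_univ, true_and, id] at hi hj hi_min hj_min
  have hxmin : ∀ k, k < i → x k = 0 := by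
    intro k hk
    by_contra h
    exact absurd (hi_min k (by simp [h])) (not_le.2 hk)
  have hymin : ∀ k, k < j → y k = 0 := by
    intro k hk
    by_contra h
    exact absurd (hj_min k (by simp [h])) (not_le.2 hk)
  right
  refine ⟨i, j, hi, hxmin, hj, hymin, ?_⟩
  by_contra hne
  have hyi : y i = x i := hprec i hi
  have hti : x i = 1 ∨ x i = -1 := by
    rcases hx i with h | h | h
    exacts [Or.inr h, absurd h hi, Or.inl h]
  have hji : j < i := by
    rcases lt_trichotomy j i with h | h | h
    · exact h
    · rw [h] at hne; exact absurd hyi.symm hne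
    · rw [hymin i h] at hyi; exact absurd hyi.symm hi
  obtain ⟨p, q, hpq, hxp, hxq, hp, hq, hpq'⟩ :=
    claim14 x color hbx hhx i (x i) hti rfl hxmin (color j)
  have hjp : j < p := lt_of_lt_of_le hji (le_of_not_gt fun h => by
    rw [hxmin p h] at hxp; exact hi hxp.symm)
  have hyp : y p = x i := by rw [hprec p (by rw [hxp]; exact hi), hxp]
  have hyq : y q = -(x i) := by
    rw [hprec q (by rw [hxq]; exact neg_ne_zero.mpr hi), hxq]
  have hyj : y j = -(x i) := by
    rcases hti with h | h <;> rcases hy j with h' | h' | h' <;>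
      rw [h] at hne ⊢ <;> rw [h'] at hne ⊢ <;> first | exact absurd h' hj | exact absurd rfl hne | norm_num
  exact hhy j p q hjp hpq (fun h => hp h.symm) (fun h => hq h.symm) hpq'
    (pat14' hti hyj hyp hyq)
end
end

section
/- Openness of separation arcs: Let Cᵢ, Cⱼ be compact convex sets in ℝ², f monotone and continuous in the Hausdorff metric, α ∈ ℝ. Then the set of directions v ∈ S¹ such that some line ℓ parallel to v satisfies f(ℓ⁺(Cᵢ)) < α and f(ℓ⁻(Cⱼ)) < α is an open subset of S¹. -/
open MeasureTheory TopologicalSpace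
open scoped Classical

noncomputable section

/-- Cross product bound (sup norm on the plane). -/
lemma abs_pcross_le (v w : Pt) : |pcross v w| ≤ 2 * ‖v‖ * ‖w‖ := by
  have h1 : |v.1| ≤ ‖v‖ := (Real.norm_eq_abs _) ▸ norm_fst_le v
  have h2 : |v.2| ≤ ‖v‖ := (Real.norm_eq_abs _) ▸ norm_snd_le v
  have h3 : |w.1| ≤ ‖w‖ := (Real.norm_eq_abs _) ▸ norm_fst_le w
  have h4 : |w.2| ≤ ‖w‖ := (Real.norm_eq_abs _) ▸ norm_snd_le w
  calc |pcross v w| = |v.1 * w.2 + -(v.2 * w.1)| := by rw [pcross, sub_eq_add_neg]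
    _ ≤ |v.1 * w.2| + |-(v.2 * w.1)| := abs_add_le _ _
    _ = |v.1| * |w.2| + |v.2| * |w.1| := by rw [abs_neg, abs_mul, abs_mul]
    _ ≤ ‖v‖ * ‖w‖ + ‖v‖ * ‖w‖ := add_le_add
        (mul_le_mul h1 h4 (abs_nonneg _) (norm_nonneg _))
        (mul_le_mul h2 h3 (abs_nonneg _) (norm_nonneg _))
    _ = 2 * ‖v‖ * ‖w‖ := by ring

/-- Half-planes of the form `{q | c ≤ pcross v (q - p)}` are convex. -/
lemma convex_pcross_ge (v p : Pt) (c : ℝ) : Convex ℝ {q : Pt | c ≤ pcross v (q - p)} := by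
  intro x hx y hy a b ha hb hab
  have hb' : b = 1 - a := by linarith
  subst hb'
  simp only [Set.mem_setOf_eq, pcross, Prod.fst_sub, Prod.snd_sub, Prod.fst_add, Prod.snd_add,
    Prod.smul_fst, Prod.smul_snd, smul_eq_mul] at *
  nlinarith [mul_nonneg ha (sub_nonneg.2 hx), mul_nonneg hb (sub_nonneg.2 hy)]

/-- Half-planes of the form `{q | pcross v (q - p) ≤ c}` are convex. -/
lemma convex_pcross_le (v p : Pt) (c : ℝ) : Convex ℝ {q : Pt | pcross v (q - p) ≤ c} := by
  intro x hx y hy a b ha hb hab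
  have hb' : b = 1 - a := by linarith
  subst hb'
  simp only [Set.mem_setOf_eq, pcross, Prod.fst_sub, Prod.snd_sub, Prod.fst_add, Prod.snd_add,
    Prod.smul_fst, Prod.smul_snd, smul_eq_mul] at *
  nlinarith [mul_nonneg ha (sub_nonneg.2 hx), mul_nonneg hb (sub_nonneg.2 hy)]

lemma continuous_pcross_sub (v p : Pt) : Continuous fun q : Pt => pcross v (q - p) := by
  simp only [pcross, Prod.fst_sub, Prod.snd_sub]
  fun_prop

/-- the set of directions admitting an `(f,α)`-separation line for a
pair of compact convex sets (with a prescribed side pattern) is open in `S¹`. -/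
theorem stmt16 (Ci Cj : Set Pt) (hci : IsCompact Ci) (hcj : IsCompact Cj)
    (hvi : Convex ℝ Ci) (hvj : Convex ℝ Cj)
    (f : Set Pt → ℝ) (hf : MonoConvex f) (hfc : HausCont f) (α : ℝ) :
    IsOpen {v : Metric.sphere (0 : Pt) 1 |
      ∃ ℓ : DLine, ℓ.v = (v : Pt) ∧ f (ℓ.left ∩ Ci) < α ∧ f (ℓ.right ∩ Cj) < α} := by
  rw [Metric.isOpen_iff]
  rintro v ⟨ℓ, hℓv, h1, h2⟩
  set u : Pt := (v : Pt) with hu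
  have hu0 : u ≠ 0 := hℓv ▸ ℓ.hv
  set p : Pt := ℓ.p with hp
  have hs0 : (0:ℝ) < u.1 ^ 2 + u.2 ^ 2 := by
    have h12 : ¬ (u.1 = 0 ∧ u.2 = 0) := fun h => hu0 (Prod.ext h.1 h.2)
    rcases not_and_or.mp h12 with h | h
    · have : 0 < u.1 ^ 2 := by positivity
      nlinarith [sq_nonneg u.2]
    · have : 0 < u.2 ^ 2 := by positivity
      nlinarith [sq_nonneg u.1]
  set n : Pt := (u.1 ^ 2 + u.2 ^ 2)⁻¹ • (-u.2, u.1) with hn_def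
  have hn : pcross u n = 1 := by
    simp only [pcross, hn_def, Prod.smul_fst, Prod.smul_snd, smul_eq_mul]
    field_simp
    ring
  have hleft : ℓ.left = {q : Pt | 0 ≤ pcross u (q - p)} := by
    rw [DLine.left, hℓv, hp]
  have hright : ℓ.right = {q : Pt | pcross u (q - p) ≤ 0} := by
    rw [DLine.right, hℓv, hp]
  have hcont : Continuous fun q : Pt => pcross u (q - p) := continuous_pcross_sub u p
  -- Step 1: find δ > 0 with f of the enlarged left piece still below α.
  have step1 : ∃ δ : ℝ, 0 < δ ∧ f ({q : Pt | -δ ≤ pcross u (q - p)} ∩ Ci) < α := by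
    by_cases hK : ({q : Pt | 0 ≤ pcross u (q - p)} ∩ Ci).Nonempty
    · -- nonempty case: use Hausdorff continuity of f
      set K0s : Set Pt := {q : Pt | 0 ≤ pcross u (q - p)} ∩ Ci with hK0s
      have hK0c : IsCompact K0s := hci.inter_left (isClosed_le continuous_const hcont)
      set K0 : NonemptyCompacts Pt := ⟨⟨K0s, hK0c⟩, hK⟩ with hK0
      have hfK0 : f K0s < α := by rw [hK0s, ← hleft]; exact h1
      obtain ⟨r, hr0, hrr⟩ := Metric.continuous_iff.mp hfc K0 (α - f K0s) (by linarith)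
      set E : Set Pt := Metric.thickening (r/2) K0s with hE
      have hEopen : IsOpen E := Metric.isOpen_thickening
      have hK0E : K0s ⊆ E := Metric.self_subset_thickening (by linarith) _
      have hSc : IsCompact (Ci \ E) := hci.diff hEopen
      have hSneg : ∀ q ∈ Ci \ E, pcross u (q - p) < 0 := by
        intro q hq
        by_contra hcon
        exact hq.2 (hK0E ⟨le_of_not_gt hcon, hq.1⟩)
      have hsub : ∃ δ : ℝ, 0 < δ ∧ ∀ q ∈ Ci, -δ ≤ pcross u (q - p) → q ∈ E := by
        by_cases hS : (Ci \ E).Nonempty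
        · obtain ⟨z, hzS, hz⟩ := hSc.exists_isMaxOn hS hcont.continuousOn
          have hzneg : pcross u (z - p) < 0 := hSneg z hzS
          refine ⟨-(pcross u (z - p)) / 2, by linarith, fun q hq hδq => ?_⟩
          by_contra hqE
          have := hz ⟨hq, hqE⟩
          simp only [Set.mem_setOf_eq] at this
          linarith
        · refine ⟨1, one_pos, fun q hq _ => ?_⟩
          by_contra hqE
          exact hS ⟨q, hq, hqE⟩
      obtain ⟨δ, hδ0, hδE⟩ := hsub
      set Kδs : Set Pt := {q : Pt | -δ ≤ pcross u (q - p)} ∩ Ci with hKδs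
      have hKδc : IsCompact Kδs := hci.inter_left (isClosed_le continuous_const hcont)
      have hKδne : Kδs.Nonempty := by
        obtain ⟨x, hx1, hx2⟩ := hK
        exact ⟨x, by simp only [Set.mem_setOf_eq] at hx1 ⊢; linarith, hx2⟩
      set Kδ : NonemptyCompacts Pt := ⟨⟨Kδs, hKδc⟩, hKδne⟩ with hKδ
      have hdist : dist Kδ K0 < r := by
        rw [Metric.NonemptyCompacts.dist_eq]
        have hle : Metric.hausdorffDist Kδs K0s ≤ r / 2 := by
          apply Metric.hausdorffDist_le_of_infDist (by linarith)
          · intro x hx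
            have hxE : x ∈ E := hδE x hx.2 hx.1
            exact le_of_lt ((Metric.mem_thickening_iff_infDist_lt hK).mp hxE)
          · intro y hy
            have hy' : y ∈ ({q : Pt | 0 ≤ pcross u (q - p)} ∩ Ci) := hy
            have h01 : (0:ℝ) ≤ pcross u (y - p) := hy'.1
            have hymem : y ∈ Kδs := ⟨show -δ ≤ pcross u (y - p) by linarith, hy'.2⟩
            rw [Metric.infDist_zero_of_mem hymem]
            linarith
        calc Metric.hausdorffDist (Kδ : Set Pt) K0s ≤ r / 2 := hle
          _ < r := by linarith
      have h3 := hrr Kδ hdist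
      have hGK0 : f (K0 : Set Pt) = f K0s := rfl
      have hGKδ : f (Kδ : Set Pt) = f Kδs := rfl
      rw [Real.dist_eq, hGK0, hGKδ, abs_lt] at h3
      refine ⟨δ, hδ0, ?_⟩
      show f Kδs < α
      linarith [h3.2]
    · -- empty case: the enlarged piece stays empty for small δ
      have hempty : ∀ q ∈ Ci, pcross u (q - p) < 0 := by
        intro q hq
        by_contra hcon
        exact hK ⟨q, le_of_not_gt hcon, hq⟩
      by_cases hCi : Ci.Nonempty
      · obtain ⟨z, hzS, hz⟩ := hci.exists_isMaxOn hCi hcont.continuousOn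
        have hzneg : pcross u (z - p) < 0 := hempty z hzS
        refine ⟨-(pcross u (z - p)) / 2, by linarith, ?_⟩
        have heq : {q : Pt | -(-(pcross u (z - p)) / 2) ≤ pcross u (q - p)} ∩ Ci
            = ℓ.left ∩ Ci := by
          rw [hleft]
          ext q
          simp only [Set.mem_inter_iff, Set.mem_setOf_eq]
          constructor
          · rintro ⟨hq1, hq2⟩
            have := hz hq2
            simp only [Set.mem_setOf_eq] at this
            constructor
            · linarith
            · exact hq2
          · rintro ⟨hq1, hq2⟩
            exact ⟨by linarith, hq2⟩
        rw [heq]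
        exact h1
      · refine ⟨1, one_pos, ?_⟩
        have heq : {q : Pt | -(1:ℝ) ≤ pcross u (q - p)} ∩ Ci = ℓ.left ∩ Ci := by
          rw [Set.not_nonempty_iff_eq_empty] at hCi
          rw [hCi, Set.inter_empty, Set.inter_empty]
        rw [heq]
        exact h1
  obtain ⟨δ, hδ0, hfδ⟩ := step1
  -- Step 2: geometry for nearby directions
  set p' : Pt := p - (δ / 2) • n with hp'
  obtain ⟨R, hR⟩ := Metric.isBounded_iff_subset_closedBall p'
    |>.mp (hci.union hcj).isBounded
  set M : ℝ := max R 1 with hM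
  have hM0 : (0:ℝ) < M := lt_of_lt_of_le one_pos (le_max_right _ _)
  have hMbound : ∀ q ∈ Ci ∪ Cj, ‖q - p'‖ ≤ M := by
    intro q hq
    have := hR hq
    rw [Metric.mem_closedBall, dist_eq_norm] at this
    exact le_trans this (le_max_left _ _)
  set ε : ℝ := δ / (8 * (M + 1)) with hε
  have hε0 : 0 < ε := by positivity
  refine ⟨ε, hε0, ?_⟩
  intro v' hv'
  rw [Metric.mem_ball, Subtype.dist_eq, dist_eq_norm] at hv'
  have hv'0 : (v' : Pt) ≠ 0 := by
    have : ‖(v' : Pt)‖ = 1 := mem_sphere_zero_iff_norm.mp v'.2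
    intro h
    rw [h, norm_zero] at this
    exact one_ne_zero this.symm
  -- the perturbation bound
  have hkey : ∀ q : Pt, q ∈ Ci ∪ Cj →
      |pcross u (q - p) - pcross (v' : Pt) (q - p') + δ / 2| ≤ δ / 4 := by
    intro q hq
    have hid : pcross u (q - p) - pcross (v' : Pt) (q - p') + δ / 2 * pcross u n
        = pcross (u - (v' : Pt)) (q - p') := by
      simp only [pcross, hp', Prod.fst_sub, Prod.snd_sub, Prod.smul_fst, Prod.smul_snd,
        smul_eq_mul]
      ring
    rw [hn, mul_one] at hid
    rw [hid]
    calc |pcross (u - (v' : Pt)) (q - p')| ≤ 2 * ‖u - (v' : Pt)‖ * ‖q - p'‖ :=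
          abs_pcross_le _ _
      _ ≤ 2 * ε * M := by
          apply mul_le_mul _ (hMbound q hq) (norm_nonneg _) (by positivity)
          have : ‖u - (v' : Pt)‖ = ‖(v' : Pt) - u‖ := norm_sub_rev _ _
          rw [this]
          nlinarith [hv', norm_nonneg ((v' : Pt) - u)]
      _ = δ * (2 * M) / (8 * (M + 1)) := by rw [hε]; ring
      _ ≤ δ / 4 := by
          rw [div_le_div_iff₀ (by positivity) (by norm_num)]
          nlinarith [hδ0.le, hM0]
  refine ⟨⟨p', (v' : Pt), hv'0⟩, rfl, ?_, ?_⟩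
  · -- left side
    refine lt_of_le_of_lt (hf _ _ ?_ ?_ ?_) hfδ
    · exact (convex_pcross_ge _ _ _).inter hvi
    · exact (convex_pcross_ge _ _ _).inter hvi
    · rintro q ⟨hq1, hq2⟩
      simp only [DLine.left, Set.mem_setOf_eq] at hq1
      refine ⟨?_, hq2⟩
      simp only [Set.mem_setOf_eq]
      have hb := hkey q (Or.inl hq2)
      rw [abs_le] at hb
      linarith [hb.1]
  · -- right side
    refine lt_of_le_of_lt (hf _ _ ?_ ?_ ?_) h2
    · exact (convex_pcross_le _ _ _).inter hvj
    · rw [DLine.right]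
      exact (convex_pcross_le _ _ _).inter hvj
    · rintro q ⟨hq1, hq2⟩
      simp only [DLine.right, Set.mem_setOf_eq] at hq1
      refine ⟨?_, hq2⟩
      rw [hright]
      simp only [Set.mem_setOf_eq]
      have hb := hkey q (Or.inr hq2)
      rw [abs_le] at hb
      linarith [hb.2]
end
end
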